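/- Let ℓ ≥ 1 be an integer, m ∈ ℝ, and for 1 ≤ k ≤ ℓ let D_k denote the operator (D_k f)(x) = f'(x) + k·tanh(x) f(x). Then for every (ℓ+2)-times continuously differentiable function f : ℝ → ℂ and every x ∈ ℝ, (D₁∘D₂∘⋯∘D_ℓ)(−f'' − ℓ(ℓ+1) sech²(·) f + m² f)(x) = (−∂ₓ² + m²)((D₁∘D₂∘⋯∘D_ℓ) f)(x), where in the composition D_ℓ is applied first and D₁ last. -/

import Mathlib

noncomputable section

/-- `sech x = 1 / cosh x`. -/
def sech (x : ℝ) : ℝ := 1 / Real.cosh x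

/-- The operator `D_k f = f' + k tanh · f`. -/
def Dk (k : ℕ) (f : ℝ → ℂ) (x : ℝ) : ℂ := deriv f x + (k : ℂ) * (Real.tanh x : ℂ) * f x

/-- The composition `D₁ ∘ D₂ ∘ ⋯ ∘ D_ℓ`, with `D_ℓ` applied first and `D₁` last. -/
def Dcomp : ℕ → (ℝ → ℂ) → ℝ → ℂ
  | 0, f => f
  | n + 1, f => Dcomp n (Dk (n + 1) f)

/-!
Writing `L_k = −∂ₓ² − k(k+1) sech² + m²`, each `D_k` intertwines two consecutive levels of the
hierarchy: `D_k L_k = L_{k-1} D_k`. This is a direct computation from `tanh' = sech²` and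
`(sech²)' = −2 sech² tanh`. Pushing `L_ℓ` through `D_ℓ`, then `D_{ℓ-1}`, …, then `D₁` lowers the
level to `L_0 = −∂ₓ² + m²`.
-/

open Real

lemma sech_sq (x : ℝ) : sech x ^ 2 = 1 - tanh x ^ 2 := by
  have := (cosh_pos x).ne'
  rw [sech, tanh_eq_sinh_div_cosh]
  field_simp
  exact (cosh_sq_sub_sinh_sq x).symm

lemma hasDerivAt_tanh (x : ℝ) : HasDerivAt tanh (sech x ^ 2) x := by
  have h := (hasDerivAt_sinh x).fun_div (hasDerivAt_cosh x) (cosh_pos x).ne'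
  rw [show tanh = fun y => sinh y / cosh y from funext tanh_eq_sinh_div_cosh]
  refine h.congr_deriv ?_
  rw [sech_sq, tanh_eq_sinh_div_cosh, div_pow]
  field_simp

lemma hasDerivAt_sech_sq (x : ℝ) :
    HasDerivAt (fun y => sech y ^ 2) (-2 * sech x ^ 2 * tanh x) x := by
  have h := ((hasDerivAt_tanh x).fun_pow 2).const_sub 1
  simp only [sech_sq] at h ⊢
  exact h.congr_deriv (by ring)

lemma contDiff_tanh {n : WithTop ℕ∞} : ContDiff ℝ n tanh := by
  rw [show tanh = fun y => sinh y / cosh y from funext tanh_eq_sinh_div_cosh]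
  exact contDiff_sinh.div contDiff_cosh fun y => (cosh_pos y).ne'

lemma hasDerivAt_ofReal_tanh (x : ℝ) :
    HasDerivAt (fun y : ℝ => (tanh y : ℂ)) ((sech x : ℂ) ^ 2) x := by
  simpa using (hasDerivAt_tanh x).ofReal_comp

lemma hasDerivAt_ofReal_sech_sq (x : ℝ) :
    HasDerivAt (fun y : ℝ => (sech y : ℂ) ^ 2) (-2 * (sech x : ℂ) ^ 2 * tanh x) x := by
  simpa using (hasDerivAt_sech_sq x).ofReal_comp

def schrodinger (k : ℕ) (m : ℝ) (f : ℝ → ℂ) (y : ℝ) : ℂ :=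
  -(deriv (deriv f) y) - (k : ℂ) * ((k : ℂ) + 1) * (sech y : ℂ) ^ 2 * f y
    + (m : ℂ) ^ 2 * f y

lemma schrodinger_zero_apply (m : ℝ) (f : ℝ → ℂ) (y : ℝ) :
    schrodinger 0 m f y = -(deriv (deriv f) y) + (m : ℂ) ^ 2 * f y := by
  simp [schrodinger]

lemma hasDerivAt_Dk (k : ℕ) {f : ℝ → ℂ} {x : ℝ} (hf : DifferentiableAt ℝ f x)
    (hf' : DifferentiableAt ℝ (deriv f) x) :
    HasDerivAt (Dk k f)
      (deriv (deriv f) x + k * ((sech x : ℂ) ^ 2 * f x + tanh x * deriv f x)) x := by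
  have h := hf'.hasDerivAt.fun_add
    (((hasDerivAt_ofReal_tanh x).fun_mul hf.hasDerivAt).const_mul (k : ℂ))
  have hDk : Dk k f = fun y => deriv f y + k * (tanh y * f y) :=
    funext fun y => by rw [Dk, mul_assoc]
  rwa [hDk]

lemma hasDerivAt_schrodinger (k : ℕ) (m : ℝ) {f : ℝ → ℂ} {x : ℝ}
    (hf : DifferentiableAt ℝ f x) (hf'' : DifferentiableAt ℝ (deriv (deriv f)) x) :
    HasDerivAt (schrodinger k m f)
      (-deriv (deriv (deriv f)) x
        - k * (k + 1) * (-2 * (sech x : ℂ) ^ 2 * tanh x * f x + (sech x : ℂ) ^ 2 * deriv f x)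
        + (m : ℂ) ^ 2 * deriv f x) x := by
  have h := (hf''.hasDerivAt.fun_neg.fun_sub
    (((hasDerivAt_ofReal_sech_sq x).const_mul ((k : ℂ) * (k + 1))).fun_mul hf.hasDerivAt)).fun_add
    (hf.hasDerivAt.const_mul ((m : ℂ) ^ 2))
  exact h.congr_deriv (by ring)

lemma deriv_Dk (k : ℕ) {f : ℝ → ℂ} (hf : Differentiable ℝ f)
    (hf' : Differentiable ℝ (deriv f)) :
    deriv (Dk k f) =
      fun y => deriv (deriv f) y + k * ((sech y : ℂ) ^ 2 * f y + tanh y * deriv f y) :=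
  funext fun y => (hasDerivAt_Dk k (hf y) (hf' y)).deriv

lemma deriv_deriv_Dk (k : ℕ) {f : ℝ → ℂ} {x : ℝ} (hf : Differentiable ℝ f)
    (hf' : Differentiable ℝ (deriv f)) (hf'' : DifferentiableAt ℝ (deriv (deriv f)) x) :
    deriv (deriv (Dk k f)) x = deriv (deriv (deriv f)) x
      + k * (-2 * (sech x : ℂ) ^ 2 * tanh x * f x + 2 * (sech x : ℂ) ^ 2 * deriv f x
        + tanh x * deriv (deriv f) x) := by
  have h := hf''.hasDerivAt.fun_add
    ((((hasDerivAt_ofReal_sech_sq x).fun_mul (hf x).hasDerivAt).fun_add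
      ((hasDerivAt_ofReal_tanh x).fun_mul (hf' x).hasDerivAt)).const_mul (k : ℂ))
  rw [deriv_Dk k hf hf', h.deriv]
  ring

lemma Dk_schrodinger_succ (k : ℕ) (m : ℝ) {f : ℝ → ℂ} (hf : ContDiff ℝ 3 f) :
    Dk (k + 1) (schrodinger (k + 1) m f) = schrodinger k m (Dk (k + 1) f) := by
  have hf₁ : Differentiable ℝ f := hf.differentiable (by norm_num)
  have hf₂ : Differentiable ℝ (deriv f) := by
    simpa using hf.differentiable_iteratedDeriv 1 (by norm_num)
  have hf₃ : Differentiable ℝ (deriv (deriv f)) := by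
    simpa [iteratedDeriv_succ] using hf.differentiable_iteratedDeriv 2 (by norm_num)
  funext x
  rw [Dk, (hasDerivAt_schrodinger (k + 1) m (hf₁ x) (hf₃ x)).deriv, schrodinger, schrodinger,
    deriv_deriv_Dk (k + 1) hf₁ hf₂ (hf₃ x), Dk]
  push_cast
  ring

lemma ContDiff.Dk {n : WithTop ℕ∞} (k : ℕ) {f : ℝ → ℂ} (hf : ContDiff ℝ (n + 1) f) :
    ContDiff ℝ n (Dk k f) :=
  hf.deriv'.add ((contDiff_const.mul (Complex.ofRealCLM.contDiff.comp contDiff_tanh)).mul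
    (hf.of_le le_self_add))

theorem Dcomp_schrodinger (m : ℝ) :
    ∀ (n : ℕ) {f : ℝ → ℂ}, ContDiff ℝ (n + 2 : ℕ) f →
      Dcomp n (schrodinger n m f) = schrodinger 0 m (Dcomp n f)
  | 0, _, _ => rfl
  | n + 1, f, hf => by
    rw [Dcomp, Dcomp, Dk_schrodinger_succ n m (hf.of_le (by norm_cast; omega))]
    exact Dcomp_schrodinger m n (hf.Dk (n + 1))

theorem conjugation_identity_general (ℓ : ℕ) (m : ℝ) (f : ℝ → ℂ)
    (hf : ContDiff ℝ (ℓ + 2 : ℕ) f) (x : ℝ) :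
    Dcomp ℓ
        (fun y => -(deriv (deriv f) y) - (ℓ : ℂ) * ((ℓ : ℂ) + 1) * (sech y : ℂ) ^ 2 * f y
          + (m : ℂ) ^ 2 * f y) x
      = -(deriv (deriv (Dcomp ℓ f)) x) + (m : ℂ) ^ 2 * Dcomp ℓ f x := by
  rw [← schrodinger_zero_apply]
  exact congrFun (Dcomp_schrodinger m ℓ hf) x

/-- The conjugation identity
`D₁⋯D_ℓ (−∂ₓ² − ℓ(ℓ+1) sech² + m²) = (−∂ₓ² + m²) D₁⋯D_ℓ` for the Pöschl–Teller hierarchy. -/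
theorem conjugation_identity (ℓ : ℕ) (hℓ : 1 ≤ ℓ) (m : ℝ) (f : ℝ → ℂ)
    (hf : ContDiff ℝ (ℓ + 2 : ℕ) f) (x : ℝ) :
    Dcomp ℓ
        (fun y => -(deriv (deriv f) y) - (ℓ : ℂ) * ((ℓ : ℂ) + 1) * (sech y : ℂ) ^ 2 * f y
          + (m : ℂ) ^ 2 * f y) x
      = -(deriv (deriv (Dcomp ℓ f)) x) + (m : ℂ) ^ 2 * Dcomp ℓ f x :=
  conjugation_identity_general ℓ m f hf x
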